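/- arXiv:1302.1936 — 2 statements merged into one kernel-verified Lean document; each statement's English description precedes it below -/
import Mathlib

section
/- If (Q,S) and (C,T) are QPs on the same vertex set with (Q,S) reduced and (C,T) trivial, then the Jacobian algebra of the direct sum satisfies 𝒫(Q⊕C, S+T) ≅ 𝒫(Q,S); in particular, a trivial QP (C,T) has Jacobian algebra 𝒫(C,T) ≅ R = ℂ^{Q₀}. -/
open scoped Classical

/-- A quiver on vertex set `V`: a set of arrows with tail (`src`) and head (`tgt`) maps. -/
structure Quiv (V : Type) where
  A : Type
  src : A → V
  tgt : A → V

namespace Quiv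

variable {V : Type} (Q : Quiv V)

/-- `Comp a b` means the arrow `a` can be composed after `b` (t(a) = h(b)). -/
def Comp (a b : Q.A) : Prop := Q.src a = Q.tgt b

/-- Positive-length paths: nonempty lists `[α₁, …, α_ℓ]` of composable arrows
(function-composition order: `t(α_j) = h(α_{j+1})`). -/
abbrev PathsPos := {l : List Q.A // l ≠ [] ∧ l.Chain' Q.Comp}

/-- Paths: either a lazy path `e_i` at a vertex `i`, or a positive-length path. -/
abbrev Pth := V ⊕ Q.PathsPos

namespace Pth

variable {Q}

/-- The length of a path. -/
def length : Q.Pth → ℕ := Sum.elim (fun _ => 0) (fun l => l.1.length)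

/-- The tail `t(p)` (starting vertex) of a path. -/
def src : Q.Pth → V := Sum.elim id (fun l => Q.src (l.1.getLast l.2.1))

/-- The head `h(p)` (ending vertex) of a path. -/
def tgt : Q.Pth → V := Sum.elim id (fun l => Q.tgt (l.1.head l.2.1))

end Pth

/-- The underlying vector space of the complete path algebra ℂ⟨⟨Q⟩⟩: all possibly
infinite ℂ-linear combinations of paths, encoded as coefficient functions. -/
abbrev CPA := Q.Pth → ℂ

/-- The coefficient of a list of arrows, viewed as a path (with `x` as fallback vertex
for the empty list). -/
noncomputable def coefAt (u : Q.CPA) (x : V) (l : List Q.A) : ℂ :=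
  if h : l = [] then u (Sum.inl x)
  else if hc : l.Chain' Q.Comp then u (Sum.inr ⟨l, h, hc⟩) else 0

/-- The multiplication of the (complete) path algebra, induced by concatenation of
paths: the coefficient of a path `p` in `conv u v` is the (finite) sum over all
splittings `p = p₁ p₂` of `u(p₁) * v(p₂)`. -/
noncomputable def conv (u v : Q.CPA) : Q.CPA := fun p =>
  match p with
  | Sum.inl x => u (Sum.inl x) * v (Sum.inl x)
  | Sum.inr l => ∑ n ∈ Finset.range (l.1.length + 1),
      coefAt Q u (Q.tgt (l.1.head l.2.1)) (l.1.take n) *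
      coefAt Q v (Q.src (l.1.getLast l.2.1)) (l.1.drop n)

/-- The identity element `∑ i e_i` of the path algebra. -/
noncomputable def one : Q.CPA := Sum.elim (fun _ => 1) (fun _ => 0)

/-- The idempotent `e_i` (the length-0 path at vertex `i`). -/
noncomputable def idem (i : V) : Q.CPA := fun p => if p = Sum.inl i then 1 else 0

/-- The arrow `a`, viewed as an element of the path algebra. -/
noncomputable def arrowδ (a : Q.A) : Q.CPA := fun p =>
  if p = Sum.inr ⟨[a], List.cons_ne_nil a [], List.isChain_singleton a⟩ then 1 else 0

/-- A path, viewed as an element of the path algebra. -/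
noncomputable def pathδ (p₀ : Q.Pth) : Q.CPA := fun p => if p = p₀ then 1 else 0

/-- Elements of ℂ⟨⟨Q⟩⟩ with coefficients supported in bounded length, i.e. the
elements of the path algebra ℂ⟨Q⟩ = ⊕_{ℓ≥0} A^ℓ. -/
def Bounded (u : Q.CPA) : Prop := ∃ N : ℕ, ∀ p : Q.Pth, N ≤ p.length → u p = 0

/-- A cycle is a positive-length path which starts and ends at the same vertex. -/
def IsCycle (p : Q.Pth) : Prop := 0 < p.length ∧ p.src = p.tgt

/-- A potential: a (possibly infinite) linear combination of cycles, no two of which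
are rotations of each other. -/
def IsPotential (S : Q.CPA) : Prop :=
  (∀ p : Q.Pth, S p ≠ 0 → Q.IsCycle p) ∧
  ∀ l l' : Q.PathsPos, S (Sum.inr l) ≠ 0 → S (Sum.inr l') ≠ 0 → l.1 ~r l'.1 → l = l'

/-- The cyclic derivative with respect to the arrow `a`:
`∂_a(α₁…α_ℓ) = ∑_k δ_{a,α_k} α_{k+1}…α_ℓα₁…α_{k-1}`, extended by linearity and
continuity.  The coefficient of a path `q` in `∂_a S` is the sum of the coefficients
in `S` of all rotations of the cycle `a·q`. -/
noncomputable def cycDer (a : Q.A) (S : Q.CPA) : Q.CPA := fun p =>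
  match p with
  | Sum.inl x =>
      if Q.src a = x ∧ Q.tgt a = x then coefAt Q S x [a] else 0
  | Sum.inr l => ∑ m ∈ Finset.range (l.1.length + 1),
      coefAt Q S (Q.tgt a) ((a :: l.1).rotate m)

/-- The two-sided ideal generated by a subset of ℂ⟨⟨Q⟩⟩. -/
def idealGen (Sg : Set Q.CPA) : Set Q.CPA :=
  {x | ∃ (n : ℕ) (f g s : Fin n → Q.CPA), (∀ k, s k ∈ Sg) ∧
    x = ∑ k, Q.conv (f k) (Q.conv (s k) (g k))}

/-- The closure of a subset of ℂ⟨⟨Q⟩⟩ in the 𝔪-adic topology. -/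
def mAdicCl (T : Set Q.CPA) : Set Q.CPA :=
  {u | ∀ n : ℕ, ∃ v ∈ T, ∀ p : Q.Pth, p.length < n → u p = v p}

/-- The Jacobian ideal `J(S)`: the closure of the two-sided ideal generated by the
cyclic derivatives of `S`. -/
def jacobIdeal (S : Q.CPA) : Set Q.CPA :=
  Q.mAdicCl (Q.idealGen (Set.range fun a => Q.cycDer a S))

/-- The set of differences `c - c'` where `c` is a cycle and `c'` its rotation. -/
def rotDiffs : Set Q.CPA :=
  {x | ∃ l l' : Q.PathsPos, Q.IsCycle (Sum.inr l) ∧ l'.1 = l.1.rotate 1 ∧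
    x = Q.pathδ (Sum.inr l) - Q.pathδ (Sum.inr l')}

/-- Cyclic equivalence: `S - S'` lies in the closure of the span of the
rotation differences of cycles. -/
def CycEquiv (S S' : Q.CPA) : Prop :=
  S - S' ∈ Q.mAdicCl (Submodule.span ℂ Q.rotDiffs : Submodule ℂ Q.CPA)

end Quiv

namespace Quiv

variable {V : Type}

/-- The direct sum `Q ⊕ C` of two quivers on the same vertex set: the arrow set is the
disjoint union of the two arrow sets. -/
def dsum (Q C : Quiv V) : Quiv V where
  A := Q.A ⊕ C.A
  src := Sum.elim Q.src C.src
  tgt := Sum.elim Q.tgt C.tgt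

/-- The inclusion `ℂ⟨⟨Q⟩⟩ → ℂ⟨⟨Q ⊕ C⟩⟩` induced by the inclusion of arrows. -/
noncomputable def inclL (Q C : Quiv V) (u : Q.CPA) : (Q.dsum C).CPA := fun p =>
  match p with
  | Sum.inl x => u (Sum.inl x)
  | Sum.inr l =>
      if h : ∃ l' : Q.PathsPos, l'.1.map Sum.inl = l.1 then u (Sum.inr h.choose) else 0

/-- The inclusion `ℂ⟨⟨C⟩⟩ → ℂ⟨⟨Q ⊕ C⟩⟩` induced by the inclusion of arrows. -/
noncomputable def inclR (Q C : Quiv V) (u : C.CPA) : (Q.dsum C).CPA := fun p =>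
  match p with
  | Sum.inl x => u (Sum.inl x)
  | Sum.inr l =>
      if h : ∃ l' : C.PathsPos, l'.1.map Sum.inr = l.1 then u (Sum.inr h.choose) else 0

/-- A QP is reduced if the degree-2 component of its potential vanishes. -/
def IsReduced (Q : Quiv V) (S : Q.CPA) : Prop :=
  Q.IsPotential S ∧ ∀ p : Q.Pth, S p ≠ 0 → p.length ≠ 2

/-- A QP is trivial if its potential lies in `A²` (a combination of 2-cycles) and the
cyclic derivatives of the potential span `A` (the span of the arrows). -/
def IsTrivial (C : Quiv V) (T : C.CPA) : Prop :=
  C.IsPotential T ∧ (∀ p : C.Pth, T p ≠ 0 → p.length = 2) ∧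
  ∀ u : C.CPA, (∀ p : C.Pth, u p ≠ 0 → p.length = 1) →
    u ∈ Submodule.span ℂ (Set.range fun a => C.cycDer a T)

end Quiv

/-!
Restriction of coefficients to the paths of `Q` is a multiplicative map
`φ : ℂ⟨⟨Q ⊕ C⟩⟩ → ℂ⟨⟨Q⟩⟩`, split by extension by zero `ι`. For an arrow `a` of `Q` the cyclic
derivative `∂_a (S + T)` is `ι (∂_a S)`, while for an arrow `c` of `C` it is `ι (∂_c T)`, which
is linear in the arrows of `C` because `T` is quadratic, so `φ` kills it. Hence `φ` maps
`J(S + T)` into `J(S)` and `ι` maps `J(S)` into `J(S + T)`. Conversely, the `∂_c T` span the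
arrows of `C`, so every path through an arrow of `C` lies in `J(S + T)`, whence
`u - ι (φ u) ∈ J(S + T)` for every `u`. The same argument for `(C, T)` alone shows that `J(T)` is
the ideal of elements without constant term.
-/

set_option linter.deprecated false

theorem List.exists_map_eq_of_forall_mem_range {α β : Type*} {f : α → β} :
    ∀ {l : List β}, (∀ b ∈ l, b ∈ Set.range f) → ∃ l' : List α, l'.map f = l
  | [], _ => ⟨[], rfl⟩
  | b :: l, h => by
    obtain ⟨a, rfl⟩ := h b List.mem_cons_self
    obtain ⟨l', hl'⟩ := List.exists_map_eq_of_forall_mem_range (l := l) fun b hb =>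
      h b (List.mem_cons_of_mem _ hb)
    exact ⟨a :: l', by simp [hl']⟩

namespace Quiv

variable {V : Type} {Q : Quiv V}

lemma coefAt_nil (u : Q.CPA) (x : V) : Q.coefAt u x [] = u (Sum.inl x) := by
  simp [coefAt]

lemma coefAt_of_ne_nil (u : Q.CPA) (x : V) {l : List Q.A} (h : l ≠ [])
    (hc : l.Chain' Q.Comp) : Q.coefAt u x l = u (Sum.inr ⟨l, h, hc⟩) := by
  rw [coefAt, dif_neg h, dif_pos hc]

lemma coefAt_of_not_chain (u : Q.CPA) (x : V) {l : List Q.A} (h : l ≠ [])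
    (hc : ¬ l.Chain' Q.Comp) : Q.coefAt u x l = 0 := by
  rw [coefAt, dif_neg h, dif_neg hc]

lemma coefAt_add (u v : Q.CPA) (x : V) (l : List Q.A) :
    Q.coefAt (u + v) x l = Q.coefAt u x l + Q.coefAt v x l := by
  unfold coefAt; split_ifs <;> simp

lemma coefAt_smul (c : ℂ) (u : Q.CPA) (x : V) (l : List Q.A) :
    Q.coefAt (c • u) x l = c * Q.coefAt u x l := by
  unfold coefAt; split_ifs <;> simp

lemma conv_inl (u v : Q.CPA) (x : V) :
    Q.conv u v (Sum.inl x) = u (Sum.inl x) * v (Sum.inl x) := rfl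

lemma conv_inr (u v : Q.CPA) (l : Q.PathsPos) :
    Q.conv u v (Sum.inr l) = ∑ n ∈ Finset.range (l.1.length + 1),
      Q.coefAt u (Q.tgt (l.1.head l.2.1)) (l.1.take n) *
      Q.coefAt v (Q.src (l.1.getLast l.2.1)) (l.1.drop n) := rfl

lemma conv_add_left (u v w : Q.CPA) : Q.conv (u + v) w = Q.conv u w + Q.conv v w := by
  funext p
  cases p with
  | inl x => simp [conv_inl, add_mul]
  | inr l => simp [conv_inr, coefAt_add, add_mul, Finset.sum_add_distrib]

lemma conv_add_right (u v w : Q.CPA) : Q.conv u (v + w) = Q.conv u v + Q.conv u w := by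
  funext p
  cases p with
  | inl x => simp [conv_inl, mul_add]
  | inr l => simp [conv_inr, coefAt_add, mul_add, Finset.sum_add_distrib]

lemma conv_smul_left (c : ℂ) (u v : Q.CPA) : Q.conv (c • u) v = c • Q.conv u v := by
  funext p
  cases p with
  | inl x => simp [conv_inl, mul_assoc]
  | inr l => simp [conv_inr, coefAt_smul, Finset.mul_sum, mul_assoc]

lemma conv_smul_right (c : ℂ) (u v : Q.CPA) : Q.conv u (c • v) = c • Q.conv u v := by
  funext p
  cases p with
  | inl x => simp [conv_inl, mul_left_comm]
  | inr l => simp [conv_inr, coefAt_smul, Finset.mul_sum, mul_left_comm]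

lemma conv_zero_left (v : Q.CPA) : Q.conv 0 v = 0 := by
  simpa using conv_smul_left 0 0 v

lemma conv_zero_right (u : Q.CPA) : Q.conv u 0 = 0 := by
  simpa using conv_smul_right 0 u 0

lemma cycDer_inl (a : Q.A) (S : Q.CPA) (x : V) :
    Q.cycDer a S (Sum.inl x) = if Q.src a = x ∧ Q.tgt a = x then Q.coefAt S x [a] else 0 :=
  rfl

lemma cycDer_inr (a : Q.A) (S : Q.CPA) (l : Q.PathsPos) :
    Q.cycDer a S (Sum.inr l) = ∑ m ∈ Finset.range (l.1.length + 1),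
      Q.coefAt S (Q.tgt a) ((a :: l.1).rotate m) := rfl

lemma cycDer_add (a : Q.A) (S S' : Q.CPA) :
    Q.cycDer a (S + S') = Q.cycDer a S + Q.cycDer a S' := by
  funext p
  cases p with
  | inl x => by_cases h : Q.src a = x ∧ Q.tgt a = x <;> simp [cycDer_inl, h, coefAt_add]
  | inr l => simp [cycDer_inr, coefAt_add, Finset.sum_add_distrib]

section IdealGen

variable {Sg : Set Q.CPA}

lemma zero_mem_idealGen : (0 : Q.CPA) ∈ Q.idealGen Sg :=
  ⟨0, Fin.elim0, Fin.elim0, Fin.elim0, fun k => k.elim0, by simp⟩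

lemma conv_conv_mem_idealGen {s : Q.CPA} (hs : s ∈ Sg) (f g : Q.CPA) :
    Q.conv f (Q.conv s g) ∈ Q.idealGen Sg :=
  ⟨1, fun _ => f, fun _ => g, fun _ => s, fun _ => hs, by simp⟩

lemma add_mem_idealGen {x y : Q.CPA} (hx : x ∈ Q.idealGen Sg) (hy : y ∈ Q.idealGen Sg) :
    x + y ∈ Q.idealGen Sg := by
  obtain ⟨n, f, g, s, hs, rfl⟩ := hx
  obtain ⟨n', f', g', s', hs', rfl⟩ := hy
  refine ⟨n + n', Fin.append f f', Fin.append g g', Fin.append s s',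
    Fin.addCases (by simpa using hs) (by simpa using hs'), ?_⟩
  simp [Fin.sum_univ_add]

lemma smul_mem_idealGen (c : ℂ) {x : Q.CPA} (hx : x ∈ Q.idealGen Sg) :
    c • x ∈ Q.idealGen Sg := by
  obtain ⟨n, f, g, s, hs, rfl⟩ := hx
  exact ⟨n, fun k => c • f k, g, s, hs, by simp [Finset.smul_sum, conv_smul_left]⟩

lemma sum_mem_idealGen {ι : Type*} (s : Finset ι) {f : ι → Q.CPA}
    (h : ∀ i ∈ s, f i ∈ Q.idealGen Sg) : ∑ i ∈ s, f i ∈ Q.idealGen Sg := by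
  induction s using Finset.induction_on with
  | empty => exact zero_mem_idealGen
  | insert a s ha ih =>
    rw [Finset.sum_insert ha]
    exact add_mem_idealGen (h a (by simp)) (ih fun i hi => h i (by simp [hi]))

lemma conv_conv_mem_idealGen_of_mem_span {s : Q.CPA} (hs : s ∈ Submodule.span ℂ Sg)
    (f g : Q.CPA) : Q.conv f (Q.conv s g) ∈ Q.idealGen Sg := by
  induction hs using Submodule.span_induction with
  | mem x hx => exact conv_conv_mem_idealGen hx f g
  | zero => simpa [conv_zero_left, conv_zero_right] using zero_mem_idealGen
  | add x y _ _ hx hy => simpa [conv_add_left, conv_add_right] using add_mem_idealGen hx hy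
  | smul c x _ hx => simpa [conv_smul_left, conv_smul_right] using smul_mem_idealGen c hx

end IdealGen

variable (Q) in
/-- The basis element of the path spelled by `l`; the vertex `x` only matters for `l = []`,
where this is the lazy path `e_x`. -/
noncomputable def listδ (x : V) (l : List Q.A) : Q.CPA
  | Sum.inl y => if l = [] ∧ y = x then 1 else 0
  | Sum.inr m => if m.1 = l then 1 else 0

lemma pathδ_inr (x : V) (m : Q.PathsPos) : Q.pathδ (Sum.inr m) = Q.listδ x m.1 := by
  funext p
  cases p with
  | inl y => simp [pathδ, listδ, m.2.1]
  | inr m' => simp [pathδ, listδ, Subtype.ext_iff]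

lemma arrowδ_eq_listδ (x : V) (a : Q.A) : Q.arrowδ a = Q.listδ x [a] := by
  funext p
  cases p with
  | inl y => simp [arrowδ, listδ]
  | inr m => simp [arrowδ, listδ, Subtype.ext_iff]

lemma coefAt_listδ (x y : V) (l k : List Q.A) (hk : k.Chain' Q.Comp) :
    Q.coefAt (Q.listδ x l) y k = if k = l ∧ (k = [] → y = x) then 1 else 0 := by
  rcases eq_or_ne k [] with rfl | hne
  · by_cases hl : l = [] <;> simp [coefAt_nil, listδ, hl, eq_comm]
  · simp [coefAt_of_ne_nil _ _ hne hk, listδ, hne]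

lemma conv_listδ_apply_inr (x y : V) (l₁ l₂ : List Q.A) (m : Q.PathsPos)
    (hx : m.1 = l₁ ++ l₂ → l₁ = [] → Q.tgt (m.1.head m.2.1) = x)
    (hy : m.1 = l₁ ++ l₂ → l₂ = [] → Q.src (m.1.getLast m.2.1) = y) :
    Q.conv (Q.listδ x l₁) (Q.listδ y l₂) (Sum.inr m) = if m.1 = l₁ ++ l₂ then 1 else 0 := by
  have htake : ∀ n ≤ m.1.length, m.1.take n = l₁ → n = l₁.length := fun n hn h => by
    simpa [hn] using congrArg List.length h
  rw [conv_inr]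
  simp only [coefAt_listδ _ _ _ _ (m.2.2.take _), coefAt_listδ _ _ _ _ (m.2.2.drop _)]
  split_ifs with h
  · have hlen : l₁.length ≤ m.1.length := by simp [h]
    rw [Finset.sum_eq_single_of_mem l₁.length (by simpa [Nat.lt_succ_iff] using hlen)]
    · have ht : m.1.take l₁.length = l₁ := by rw [h, List.take_left]
      have hd : m.1.drop l₁.length = l₂ := by rw [h, List.drop_left]
      rw [if_pos ⟨ht, fun h0 => hx h (ht ▸ h0)⟩, if_pos ⟨hd, fun h0 => hy h (hd ▸ h0)⟩, one_mul]
    · intro n hn hne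
      rw [if_neg fun h' => hne (htake n (by simpa [Nat.lt_succ_iff] using hn) h'.1), zero_mul]
  · refine Finset.sum_eq_zero fun n hn => ?_
    by_cases ht : m.1.take n = l₁
    · have hd : m.1.drop n ≠ l₂ := fun hd => h (by rw [← ht, ← hd, List.take_append_drop])
      simp [hd]
    · simp [ht]

lemma listδ_append_cons (x y : V) (a : Q.A) (l₁ l₂ : List Q.A) :
    Q.listδ x (l₁ ++ a :: l₂) =
      Q.conv (Q.listδ (Q.tgt a) l₁) (Q.conv (Q.listδ y [a]) (Q.listδ (Q.src a) l₂)) := by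
  have hright : Q.conv (Q.listδ y [a]) (Q.listδ (Q.src a) l₂) = Q.listδ (Q.tgt a) (a :: l₂) := by
    funext p
    cases p with
    | inl z => simp [conv_inl, listδ]
    | inr m =>
      rw [conv_listδ_apply_inr _ _ _ _ _ (by simp)]
      · simp [listδ]
      · rintro h rfl
        simp [h]
  funext p
  cases p with
  | inl z => simp [conv_inl, listδ, hright]
  | inr m =>
    rw [hright, conv_listδ_apply_inr _ _ _ _ _ _ (by simp)]
    · simp [listδ]
    · rintro h rfl
      simp [h]

lemma pathδ_mem_idealGen {Sg : Set Q.CPA} {m : Q.PathsPos} {l₁ l₂ : List Q.A} {a : Q.A}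
    (hm : m.1 = l₁ ++ a :: l₂) (ha : Q.arrowδ a ∈ Submodule.span ℂ Sg) :
    Q.pathδ (Sum.inr m) ∈ Q.idealGen Sg := by
  rw [pathδ_inr (Q.tgt a), hm, listδ_append_cons _ (Q.src a), ← arrowδ_eq_listδ]
  exact conv_conv_mem_idealGen_of_mem_span ha _ _

lemma mem_mAdicCl_of_mem {T : Set Q.CPA} {x : Q.CPA} (h : x ∈ T) : x ∈ Q.mAdicCl T :=
  fun _ => ⟨x, h, fun _ _ => rfl⟩

lemma zero_mem_jacobIdeal (S : Q.CPA) : (0 : Q.CPA) ∈ Q.jacobIdeal S :=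
  mem_mAdicCl_of_mem zero_mem_idealGen

lemma add_mem_jacobIdeal {S x y : Q.CPA} (hx : x ∈ Q.jacobIdeal S)
    (hy : y ∈ Q.jacobIdeal S) : x + y ∈ Q.jacobIdeal S := fun n => by
  obtain ⟨v, hv, hxv⟩ := hx n
  obtain ⟨w, hw, hyw⟩ := hy n
  exact ⟨v + w, add_mem_idealGen hv hw, fun p hp => by simp [hxv p hp, hyw p hp]⟩

lemma mapsTo_mAdicCl {R : Quiv V} {T : Set Q.CPA} {T' : Set R.CPA} {f : Q.CPA → R.CPA}
    (hf : Set.MapsTo f T T')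
    (htrunc : ∀ n u v, (∀ p : Q.Pth, p.length < n → u p = v p) →
      ∀ p : R.Pth, p.length < n → f u p = f v p) :
    Set.MapsTo f (Q.mAdicCl T) (R.mAdicCl T') := fun u hu n => by
  obtain ⟨v, hv, huv⟩ := hu n
  exact ⟨f v, hf hv, htrunc n u v huv⟩

lemma finite_setOf_length_lt [Finite Q.A] (n : ℕ) :
    {m : Q.PathsPos | m.1.length < n}.Finite :=
  (List.finite_length_lt Q.A n).preimage Subtype.val_injective.injOn

/-- The truncations of `u` are finite combinations of paths, as there are finitely many
arrows. -/
lemma mem_mAdicCl_idealGen [Finite Q.A] {Sg : Set Q.CPA} {u : Q.CPA}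
    (h0 : ∀ x, u (Sum.inl x) = 0)
    (h1 : ∀ m : Q.PathsPos, u (Sum.inr m) ≠ 0 → Q.pathδ (Sum.inr m) ∈ Q.idealGen Sg) :
    u ∈ Q.mAdicCl (Q.idealGen Sg) := fun n => by
  let F := (finite_setOf_length_lt (Q := Q) n).toFinset
  refine ⟨∑ m ∈ F, u (Sum.inr m) • Q.pathδ (Sum.inr m), ?_, ?_⟩
  · refine sum_mem_idealGen _ fun m _ => ?_
    by_cases hu : u (Sum.inr m) = 0
    · simpa [hu] using zero_mem_idealGen
    · exact smul_mem_idealGen _ (h1 m hu)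
  · rintro (x | m) hm
    · simp [h0, pathδ]
    · have hmF : m ∈ F := by simpa [F, Pth.length] using hm
      simp [pathδ, Finset.sum_apply, hmF]

structure Embedding (Q R : Quiv V) where
  toFun : Q.A → R.A
  injective : Function.Injective toFun
  src_toFun : ∀ a, R.src (toFun a) = Q.src a
  tgt_toFun : ∀ a, R.tgt (toFun a) = Q.tgt a

namespace Embedding

variable {R : Quiv V} (e : Embedding Q R)

lemma chain'_map_iff {l : List Q.A} : (l.map e.toFun).Chain' R.Comp ↔ l.Chain' Q.Comp := by
  simp only [List.Chain', List.isChain_map, Comp, e.src_toFun, e.tgt_toFun]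
  rfl

def mapPath (l : Q.PathsPos) : R.PathsPos :=
  ⟨l.1.map e.toFun, by simpa using l.2.1, e.chain'_map_iff.2 l.2.2⟩

def mapPth : Q.Pth → R.Pth := Sum.map id e.mapPath

@[simp] lemma mapPath_coe (l : Q.PathsPos) : (e.mapPath l).1 = l.1.map e.toFun := rfl

lemma length_mapPth (p : Q.Pth) : (e.mapPth p).length = p.length := by
  cases p <;> simp [mapPth, Pth.length]

lemma mapPath_injective : Function.Injective e.mapPath := fun _ _ h =>
  Subtype.ext (List.map_injective_iff.2 e.injective (congrArg Subtype.val h))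

lemma exists_mapPath_eq_or_exists_not_mem_range (m : R.PathsPos) :
    (∃ l, e.mapPath l = m) ∨ ∃ b ∈ m.1, b ∉ Set.range e.toFun := by
  by_cases h : ∀ b ∈ m.1, b ∈ Set.range e.toFun
  · obtain ⟨l, hl⟩ := List.exists_map_eq_of_forall_mem_range h
    have hchain : l.Chain' Q.Comp := e.chain'_map_iff.1 (hl ▸ m.2.2)
    exact .inl ⟨⟨l, by rintro rfl; exact m.2.1 hl.symm, hchain⟩, Subtype.ext hl⟩
  · push Not at h
    exact .inr h

noncomputable def pull : R.CPA →ₗ[ℂ] Q.CPA where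
  toFun u := u ∘ e.mapPth
  map_add' _ _ := rfl
  map_smul' _ _ := rfl

noncomputable def push : Q.CPA →ₗ[ℂ] R.CPA where
  toFun u
    | Sum.inl x => u (Sum.inl x)
    | Sum.inr l =>
      if h : ∃ l' : Q.PathsPos, l'.1.map e.toFun = l.1 then u (Sum.inr h.choose) else 0
  map_add' u v := by
    funext p
    cases p with
    | inl x => rfl
    | inr m => dsimp only [Pi.add_apply, Pi.smul_apply]; split <;> simp
  map_smul' c u := by
    funext p
    cases p with
    | inl x => rfl
    | inr m => dsimp only [Pi.add_apply, Pi.smul_apply]; split <;> simp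

lemma pull_apply (u : R.CPA) (p : Q.Pth) : e.pull u p = u (e.mapPth p) := rfl

lemma push_inl (u : Q.CPA) (x : V) : e.push u (Sum.inl x) = u (Sum.inl x) := rfl

lemma push_mapPath (u : Q.CPA) (l : Q.PathsPos) :
    e.push u (Sum.inr (e.mapPath l)) = u (Sum.inr l) := by
  have h : ∃ l' : Q.PathsPos, l'.1.map e.toFun = (e.mapPath l).1 := ⟨l, rfl⟩
  change (if h : _ then _ else _) = _
  rw [dif_pos h, e.mapPath_injective (Subtype.ext h.choose_spec : e.mapPath _ = _)]

lemma push_mapPth (u : Q.CPA) (p : Q.Pth) : e.push u (e.mapPth p) = u p := by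
  cases p with
  | inl x => rfl
  | inr l => exact e.push_mapPath u l

lemma push_inr_of_not_mem_range (u : Q.CPA) {m : R.PathsPos} {b : R.A} (hbm : b ∈ m.1)
    (hb : b ∉ Set.range e.toFun) : e.push u (Sum.inr m) = 0 := by
  change (if h : _ then _ else _) = _
  refine dif_neg ?_
  rintro ⟨l, hl⟩
  rw [← hl, List.mem_map] at hbm
  obtain ⟨a, -, rfl⟩ := hbm
  exact hb ⟨a, rfl⟩

lemma pull_push (u : Q.CPA) : e.pull (e.push u) = u := funext (e.push_mapPth u)

lemma coefAt_pull (u : R.CPA) (x : V) (l : List Q.A) :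
    Q.coefAt (e.pull u) x l = R.coefAt u x (l.map e.toFun) := by
  rcases eq_or_ne l [] with rfl | hne
  · simp [coefAt_nil, pull_apply, mapPth]
  · by_cases hc : l.Chain' Q.Comp
    · rw [coefAt_of_ne_nil _ _ hne hc, coefAt_of_ne_nil _ _ (by simpa using hne)
        (e.chain'_map_iff.2 hc)]
      rfl
    · rw [coefAt_of_not_chain _ _ hne hc, coefAt_of_not_chain _ _ (by simpa using hne)
        (mt e.chain'_map_iff.1 hc)]

lemma coefAt_push_map (u : Q.CPA) (x : V) (l : List Q.A) :
    R.coefAt (e.push u) x (l.map e.toFun) = Q.coefAt u x l := by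
  rw [← coefAt_pull, pull_push]

lemma coefAt_push_of_not_mem_range (u : Q.CPA) (x : V) {l : List R.A} {b : R.A}
    (hbl : b ∈ l) (hb : b ∉ Set.range e.toFun) : R.coefAt (e.push u) x l = 0 := by
  have hne : l ≠ [] := List.ne_nil_of_mem hbl
  by_cases hc : l.Chain' R.Comp
  · rw [coefAt_of_ne_nil _ _ hne hc]
    exact e.push_inr_of_not_mem_range u (m := ⟨l, hne, hc⟩) hbl hb
  · exact coefAt_of_not_chain _ _ hne hc

lemma pull_conv (u v : R.CPA) : e.pull (R.conv u v) = Q.conv (e.pull u) (e.pull v) := by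
  funext p
  cases p with
  | inl x => rfl
  | inr l =>
    change R.conv u v (Sum.inr (e.mapPath l)) = _
    simp only [conv_inr, mapPath_coe, List.length_map, ← List.map_take, ← List.map_drop,
      coefAt_pull, List.head_map, List.getLast_map, e.src_toFun, e.tgt_toFun]

lemma push_conv (u v : Q.CPA) : e.push (Q.conv u v) = R.conv (e.push u) (e.push v) := by
  funext p
  cases p with
  | inl x => rfl
  | inr m =>
    rcases e.exists_mapPath_eq_or_exists_not_mem_range m with ⟨l, rfl⟩ | ⟨b, hbm, hb⟩
    · simp only [push_mapPath, conv_inr, mapPath_coe, List.length_map, ← List.map_take,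
        ← List.map_drop, coefAt_push_map, List.head_map, List.getLast_map, e.src_toFun,
        e.tgt_toFun]
    · rw [e.push_inr_of_not_mem_range _ hbm hb, conv_inr]
      refine (Finset.sum_eq_zero fun n _ => ?_).symm
      rw [← List.take_append_drop n m.1, List.mem_append] at hbm
      rcases hbm with hbm | hbm
      · rw [e.coefAt_push_of_not_mem_range _ _ hbm hb, zero_mul]
      · rw [e.coefAt_push_of_not_mem_range _ _ hbm hb, mul_zero]

lemma cycDer_push (a : Q.A) (S : Q.CPA) :
    R.cycDer (e.toFun a) (e.push S) = e.push (Q.cycDer a S) := by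
  funext p
  cases p with
  | inl x =>
    rw [cycDer_inl, push_inl, cycDer_inl, e.src_toFun, e.tgt_toFun, ← List.map_singleton,
      coefAt_push_map]
  | inr m =>
    rcases e.exists_mapPath_eq_or_exists_not_mem_range m with ⟨l, rfl⟩ | ⟨b, hbm, hb⟩
    · rw [push_mapPath, cycDer_inr, cycDer_inr]
      simp only [mapPath_coe, List.length_map, e.tgt_toFun, ← List.map_cons,
        ← List.map_rotate, coefAt_push_map]
    · rw [e.push_inr_of_not_mem_range _ hbm hb, cycDer_inr]
      exact Finset.sum_eq_zero fun k _ => e.coefAt_push_of_not_mem_range _ _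
        (List.mem_rotate.2 (List.mem_cons_of_mem _ hbm)) hb

lemma cycDer_push_of_not_mem_range {b : R.A} (hb : b ∉ Set.range e.toFun) (S : Q.CPA) :
    R.cycDer b (e.push S) = 0 := by
  funext p
  cases p with
  | inl x => simp [cycDer_inl, e.coefAt_push_of_not_mem_range _ _ (List.mem_singleton_self b) hb]
  | inr m =>
    exact Finset.sum_eq_zero fun k _ => e.coefAt_push_of_not_mem_range _ _
      (List.mem_rotate.2 List.mem_cons_self) hb

lemma pull_one : e.pull R.one = Q.one := by
  funext p
  cases p <;> rfl

lemma push_arrowδ (a : Q.A) : e.push (Q.arrowδ a) = R.arrowδ (e.toFun a) := by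
  funext p
  cases p with
  | inl x => simp [push_inl, arrowδ]
  | inr m =>
    rcases e.exists_mapPath_eq_or_exists_not_mem_range m with ⟨l, rfl⟩ | ⟨b, hbm, hb⟩
    · rw [push_mapPath, arrowδ_eq_listδ (Q.src a), arrowδ_eq_listδ (Q.src a)]
      have hsingle : l.1.map e.toFun = [e.toFun a] ↔ l.1 = [a] := by
        rw [← List.map_singleton (f := e.toFun) (a := a)]
        exact (List.map_injective_iff.2 e.injective).eq_iff
      simp only [listδ, mapPath_coe, hsingle]
    · rw [e.push_inr_of_not_mem_range _ hbm hb, arrowδ, if_neg]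
      intro h
      rw [congrArg Subtype.val (Sum.inr_injective h), List.mem_singleton] at hbm
      exact hb ⟨a, hbm.symm⟩

lemma pull_push_inr_of_disjoint {C : Quiv V} (e' : Embedding C R)
    (hdisj : ∀ a c, e.toFun a ≠ e'.toFun c) (u : C.CPA) (l : Q.PathsPos) :
    e.pull (e'.push u) (Sum.inr l) = 0 :=
  e'.push_inr_of_not_mem_range u (m := e.mapPath l)
    (List.mem_map_of_mem (List.head_mem l.2.1)) fun ⟨c, hc⟩ => hdisj _ c hc.symm

end Embedding

section Functoriality

variable {R : Quiv V} {Sg : Set Q.CPA} {Sg' : Set R.CPA}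

lemma mapsTo_idealGen (f : Q.CPA →ₗ[ℂ] R.CPA)
    (hf : ∀ u v, f (Q.conv u v) = R.conv (f u) (f v))
    (hS : ∀ s ∈ Sg, f s ∈ Submodule.span ℂ Sg') :
    Set.MapsTo f (Q.idealGen Sg) (R.idealGen Sg') := by
  rintro _ ⟨n, g, h, s, hs, rfl⟩
  rw [map_sum]
  refine sum_mem_idealGen _ fun k _ => ?_
  rw [hf, hf]
  exact conv_conv_mem_idealGen_of_mem_span (hS _ (hs k)) _ _

lemma Embedding.pull_mapsTo_mAdicCl (e : Embedding Q R) (h : Set.MapsTo e.pull Sg' Sg) :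
    Set.MapsTo e.pull (R.mAdicCl Sg') (Q.mAdicCl Sg) :=
  mapsTo_mAdicCl h fun _ _ _ huv p hp => huv _ (by rwa [e.length_mapPth])

lemma Embedding.push_mapsTo_mAdicCl (e : Embedding Q R) (h : Set.MapsTo e.push Sg Sg') :
    Set.MapsTo e.push (Q.mAdicCl Sg) (R.mAdicCl Sg') := by
  refine mapsTo_mAdicCl h fun n u v huv p hp => ?_
  rcases p with x | m
  · exact huv (Sum.inl x) hp
  · rcases e.exists_mapPath_eq_or_exists_not_mem_range m with ⟨l, rfl⟩ | ⟨b, hbm, hb⟩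
    · rw [e.push_mapPath, e.push_mapPath]
      exact huv (Sum.inr l) (by simpa [Pth.length] using hp)
    · rw [e.push_inr_of_not_mem_range _ hbm hb, e.push_inr_of_not_mem_range _ hbm hb]

end Functoriality

lemma arrowδ_length (a : Q.A) (p : Q.Pth) (hp : Q.arrowδ a p ≠ 0) : p.length = 1 := by
  rcases p with x | m
  · simp [arrowδ] at hp
  · rw [arrowδ_eq_listδ (Q.src a)] at hp
    simp only [listδ, ne_eq, ite_eq_right_iff, one_ne_zero, imp_false, not_not] at hp
    simp [Pth.length, hp]

lemma IsTrivial.arrowδ_mem_span {T : Q.CPA} (hT : Q.IsTrivial T) (a : Q.A) :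
    Q.arrowδ a ∈ Submodule.span ℂ (Set.range fun b => Q.cycDer b T) :=
  hT.2.2 _ (arrowδ_length a)

/-- The cyclic derivatives of a quadratic potential are linear. -/
lemma IsTrivial.cycDer_inl_eq_zero {T : Q.CPA} (hT : Q.IsTrivial T) (a : Q.A) (x : V) :
    Q.cycDer a T (Sum.inl x) = 0 := by
  have : Q.coefAt T x [a] = 0 := by
    rw [coefAt_of_ne_nil _ _ (List.cons_ne_nil a []) (List.isChain_singleton a)]
    by_contra h
    simpa [Pth.length] using hT.2.1 _ h
  simp [cycDer_inl, this]

lemma idealGen_apply_inl {Sg : Set Q.CPA} (h0 : ∀ s ∈ Sg, ∀ x, s (Sum.inl x) = 0)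
    {v : Q.CPA} (hv : v ∈ Q.idealGen Sg) (x : V) : v (Sum.inl x) = 0 := by
  obtain ⟨n, f, g, s, hs, rfl⟩ := hv
  rw [Finset.sum_apply]
  exact Finset.sum_eq_zero fun k _ => by rw [conv_inl, conv_inl, h0 _ (hs k), zero_mul, mul_zero]

lemma IsTrivial.mem_jacobIdeal_iff [Finite Q.A] {T : Q.CPA} (hT : Q.IsTrivial T) (u : Q.CPA) :
    u ∈ Q.jacobIdeal T ↔ ∀ x, u (Sum.inl x) = 0 := by
  refine ⟨fun hu x => ?_, fun hu => mem_mAdicCl_idealGen hu fun m _ => ?_⟩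
  · obtain ⟨v, hv, huv⟩ := hu 1
    rw [huv (Sum.inl x) Nat.one_pos]
    exact idealGen_apply_inl (by rintro _ ⟨a, rfl⟩; exact hT.cycDer_inl_eq_zero a) hv x
  · obtain ⟨a, l, hm⟩ := List.exists_cons_of_ne_nil m.2.1
    exact pathδ_mem_idealGen (l₁ := []) hm (hT.arrowδ_mem_span a)

section DirectSum

variable {C : Quiv V}

instance [Finite Q.A] [Finite C.A] : Finite (Q.dsum C).A :=
  inferInstanceAs (Finite (Q.A ⊕ C.A))

variable (Q C) in
def Embedding.inl : Embedding Q (Q.dsum C) :=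
  ⟨Sum.inl, Sum.inl_injective, fun _ => rfl, fun _ => rfl⟩

variable (Q C) in
def Embedding.inr : Embedding C (Q.dsum C) :=
  ⟨Sum.inr, Sum.inr_injective, fun _ => rfl, fun _ => rfl⟩

lemma inclL_eq_push : inclL Q C = (Embedding.inl Q C).push := by
  funext u p
  cases p <;> rfl

lemma inclR_eq_push : inclR Q C = (Embedding.inr Q C).push := by
  funext u p
  cases p <;> rfl

variable (S : Q.CPA) (T : C.CPA)

noncomputable abbrev dsumPot : (Q.dsum C).CPA :=
  (Embedding.inl Q C).push S + (Embedding.inr Q C).push T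

lemma cycDer_dsumPot_inl (a : Q.A) :
    (Q.dsum C).cycDer ((Embedding.inl Q C).toFun a) (dsumPot S T) =
      (Embedding.inl Q C).push (Q.cycDer a S) := by
  rw [cycDer_add, Embedding.cycDer_push,
    Embedding.cycDer_push_of_not_mem_range _ (by rintro ⟨c, h⟩; exact Sum.inr_ne_inl h),
    add_zero]

lemma cycDer_dsumPot_inr (c : C.A) :
    (Q.dsum C).cycDer ((Embedding.inr Q C).toFun c) (dsumPot S T) =
      (Embedding.inr Q C).push (C.cycDer c T) := by
  rw [cycDer_add, Embedding.cycDer_push,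
    Embedding.cycDer_push_of_not_mem_range _ (by rintro ⟨a, h⟩; exact Sum.inl_ne_inr h),
    zero_add]

variable {S T}

lemma pull_push_inr_eq_zero {u : C.CPA} (hu : ∀ x, u (Sum.inl x) = 0) :
    (Embedding.inl Q C).pull ((Embedding.inr Q C).push u) = 0 := by
  funext p
  rcases p with x | l
  · exact hu x
  · exact (Embedding.inl Q C).pull_push_inr_of_disjoint (Embedding.inr Q C)
      (fun _ _ => Sum.inl_ne_inr) u l

lemma push_mem_jacobIdeal_dsumPot {v : Q.CPA} (hv : v ∈ Q.jacobIdeal S) :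
    (Embedding.inl Q C).push v ∈ (Q.dsum C).jacobIdeal (dsumPot S T) := by
  refine (Embedding.inl Q C).push_mapsTo_mAdicCl (mapsTo_idealGen _
    (Embedding.inl Q C).push_conv ?_) hv
  rintro _ ⟨a, rfl⟩
  exact Submodule.subset_span ⟨_, cycDer_dsumPot_inl S T a⟩

lemma pull_mem_jacobIdeal_of_mem (hT : C.IsTrivial T) {u : (Q.dsum C).CPA}
    (hu : u ∈ (Q.dsum C).jacobIdeal (dsumPot S T)) :
    (Embedding.inl Q C).pull u ∈ Q.jacobIdeal S := by
  refine (Embedding.inl Q C).pull_mapsTo_mAdicCl (mapsTo_idealGen _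
    (Embedding.inl Q C).pull_conv ?_) hu
  rintro _ ⟨a | c, rfl⟩
  · change (Embedding.inl Q C).pull ((Q.dsum C).cycDer ((Embedding.inl Q C).toFun a) _) ∈ _
    rw [cycDer_dsumPot_inl, Embedding.pull_push]
    exact Submodule.subset_span ⟨a, rfl⟩
  · change (Embedding.inl Q C).pull ((Q.dsum C).cycDer ((Embedding.inr Q C).toFun c) _) ∈ _
    rw [cycDer_dsumPot_inr, pull_push_inr_eq_zero (hT.cycDer_inl_eq_zero c)]
    exact zero_mem _

lemma arrowδ_inr_mem_span (hT : C.IsTrivial T) (c : C.A) :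
    (Q.dsum C).arrowδ ((Embedding.inr Q C).toFun c) ∈
      Submodule.span ℂ (Set.range fun b => (Q.dsum C).cycDer b (dsumPot S T)) := by
  have h := Submodule.mem_map_of_mem (f := (Embedding.inr Q C).push) (hT.arrowδ_mem_span c)
  rw [Embedding.push_arrowδ, Submodule.map_span, ← Set.range_comp] at h
  refine Submodule.span_mono ?_ h
  rintro _ ⟨c', rfl⟩
  exact ⟨_, cycDer_dsumPot_inr S T c'⟩

/-- Paths through an arrow of `C` lie in the Jacobian ideal, since the cyclic derivatives of
`T` span the arrows of `C`; so only the `Q`-part of an element matters. -/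
lemma sub_push_pull_mem_jacobIdeal [Finite Q.A] [Finite C.A] (hT : C.IsTrivial T)
    (u : (Q.dsum C).CPA) :
    u - (Embedding.inl Q C).push ((Embedding.inl Q C).pull u) ∈
      (Q.dsum C).jacobIdeal (dsumPot S T) := by
  refine mem_mAdicCl_idealGen (fun x => sub_self _) fun m hm => ?_
  rcases (Embedding.inl Q C).exists_mapPath_eq_or_exists_not_mem_range m
    with ⟨l, rfl⟩ | ⟨b, hbm, hb⟩
  · simp [Embedding.push_mapPath, Embedding.pull_apply, Embedding.mapPth] at hm
  · obtain ⟨l₁, l₂, hsplit⟩ := List.append_of_mem hbm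
    rcases b with a | c
    · exact absurd ⟨a, rfl⟩ hb
    · exact pathδ_mem_idealGen hsplit (arrowδ_inr_mem_span hT c)

lemma pull_mem_jacobIdeal_iff [Finite Q.A] [Finite C.A] (hT : C.IsTrivial T)
    (u : (Q.dsum C).CPA) :
    (Embedding.inl Q C).pull u ∈ Q.jacobIdeal S ↔ u ∈ (Q.dsum C).jacobIdeal (dsumPot S T) := by
  refine ⟨fun hu => ?_, pull_mem_jacobIdeal_of_mem hT⟩
  rw [← add_sub_cancel ((Embedding.inl Q C).push ((Embedding.inl Q C).pull u)) u]
  exact add_mem_jacobIdeal (push_mem_jacobIdeal_dsumPot hu) (sub_push_pull_mem_jacobIdeal hT u)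

end DirectSum

end Quiv

open Quiv in
theorem stmt10_general (V : Type) [DecidableEq V] (Q C : Quiv V)
    [Fintype Q.A] [Fintype C.A]
    (S : Q.CPA) (T : C.CPA) (htriv : C.IsTrivial T) :
    (∃ φ : (Q.dsum C).CPA → Q.CPA,
      (∀ u v, φ (u + v) = φ u + φ v) ∧
      (∀ (c : ℂ) u, φ (c • u) = c • φ u) ∧
      (∀ u v, φ ((Q.dsum C).conv u v) - Q.conv (φ u) (φ v) ∈ Q.jacobIdeal S) ∧
      (φ ((Q.dsum C).one) - Q.one ∈ Q.jacobIdeal S) ∧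
      Function.Surjective φ ∧
      (∀ u, φ u ∈ Q.jacobIdeal S ↔
        u ∈ (Q.dsum C).jacobIdeal (inclL Q C S + inclR Q C T))) ∧
    (∃ ψ : C.CPA → (V → ℂ),
      (∀ u v, ψ (u + v) = ψ u + ψ v) ∧
      (∀ (c : ℂ) u, ψ (c • u) = c • ψ u) ∧
      (∀ u v, ψ (C.conv u v) = ψ u * ψ v) ∧
      ψ C.one = 1 ∧
      (∀ i : V, ψ (C.idem i) = Pi.single i 1) ∧
      Function.Surjective ψ ∧
      ∀ u, ψ u = 0 ↔ u ∈ C.jacobIdeal T) := by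
  rw [inclL_eq_push, inclR_eq_push]
  let φ := (Embedding.inl Q C).pull
  refine ⟨⟨φ, map_add φ, map_smul φ, fun u v => ?_, ?_, fun v => ⟨_, Embedding.pull_push _ v⟩,
      pull_mem_jacobIdeal_iff htriv⟩,
    ⟨fun u i => u (Sum.inl i), fun _ _ => rfl, fun _ _ => rfl, fun _ _ => rfl, rfl,
      fun i => ?_, fun f => ⟨Sum.elim f 0, rfl⟩, fun u => ?_⟩⟩
  · rw [Embedding.pull_conv, sub_self]
    exact zero_mem_jacobIdeal S
  · rw [Embedding.pull_one, sub_self]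
    exact zero_mem_jacobIdeal S
  · funext j
    simp [idem, Pi.single_apply]
  · rw [htriv.mem_jacobIdeal_iff, funext_iff]
    rfl

open Quiv in
/-- If `(Q,S)` is a reduced QP and `(C,T)` a trivial QP on the same vertex set, then
the Jacobian algebra of the direct sum satisfies `𝒫(Q⊕C, S+T) ≅ 𝒫(Q,S)` (an
isomorphism of quotient algebras); in particular the Jacobian algebra of a trivial QP
is `𝒫(C,T) ≅ R = ℂ^{Q₀}`. -/
theorem stmt10 (V : Type) [Fintype V] [DecidableEq V] (Q C : Quiv V)
    [Fintype Q.A] [Fintype C.A]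
    (S : Q.CPA) (T : C.CPA) (hred : Q.IsReduced S) (htriv : C.IsTrivial T) :
    (∃ φ : (Q.dsum C).CPA → Q.CPA,
      (∀ u v, φ (u + v) = φ u + φ v) ∧
      (∀ (c : ℂ) u, φ (c • u) = c • φ u) ∧
      (∀ u v, φ ((Q.dsum C).conv u v) - Q.conv (φ u) (φ v) ∈ Q.jacobIdeal S) ∧
      (φ ((Q.dsum C).one) - Q.one ∈ Q.jacobIdeal S) ∧
      Function.Surjective φ ∧
      (∀ u, φ u ∈ Q.jacobIdeal S ↔
        u ∈ (Q.dsum C).jacobIdeal (inclL Q C S + inclR Q C T))) ∧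
    (∃ ψ : C.CPA → (V → ℂ),
      (∀ u v, ψ (u + v) = ψ u + ψ v) ∧
      (∀ (c : ℂ) u, ψ (c • u) = c • ψ u) ∧
      (∀ u v, ψ (C.conv u v) = ψ u * ψ v) ∧
      ψ C.one = 1 ∧
      (∀ i : V, ψ (C.idem i) = Pi.single i 1) ∧
      Function.Surjective ψ ∧
      ∀ u, ψ u = 0 ↔ u ∈ C.jacobIdeal T) :=
  stmt10_general V Q C S T htriv
end

section
/- Flips of arcs in triangulations of a polygon correspond to diagonal flips: for a convex (n+3)-gon, the exchange graph whose vertices are triangulations (by non-crossing diagonals) and whose edges are flips is connected, i.e., any two triangulations of the polygon are related by a finite sequence of flips. -/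
/-- The pair `p = (i, j)` with `i < j` is a side of the convex polygon with vertex set
`Fin m` (vertices labelled clockwise). -/
def IsSide (m : ℕ) (p : Fin m × Fin m) : Prop :=
  p.1 < p.2 ∧ ((p.2 : ℕ) = (p.1 : ℕ) + 1 ∨ ((p.1 : ℕ) = 0 ∧ (p.2 : ℕ) = m - 1))

/-- The pair `p = (i, j)` with `i < j` is a diagonal of the convex polygon with vertex
set `Fin m`: it joins two non-adjacent vertices. -/
def IsDiag (m : ℕ) (p : Fin m × Fin m) : Prop :=
  p.1 < p.2 ∧ ¬((p.2 : ℕ) = (p.1 : ℕ) + 1 ∨ ((p.1 : ℕ) = 0 ∧ (p.2 : ℕ) = m - 1))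

/-- The diagonals of the convex polygon with `m` vertices. -/
abbrev Diag (m : ℕ) := {p : Fin m × Fin m // IsDiag m p}

/-- Two diagonals cross iff their endpoints strictly interleave. -/
def Cross {m : ℕ} (d e : Diag m) : Prop :=
  (d.1.1 < e.1.1 ∧ e.1.1 < d.1.2 ∧ d.1.2 < e.1.2) ∨
  (e.1.1 < d.1.1 ∧ d.1.1 < e.1.2 ∧ e.1.2 < d.1.2)

/-- A triangulation of the convex polygon with `m = n + 3` vertices: a maximal set of
pairwise non-crossing diagonals (equivalently, exactly `m - 3` pairwise non-crossing
diagonals). -/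
def IsTriangulation {m : ℕ} (T : Finset (Diag m)) : Prop :=
  (∀ d ∈ T, ∀ e ∈ T, ¬Cross d e) ∧ T.card + 3 = m

/-- The flip relation: `T'` is obtained from the triangulation `T` by removing one
diagonal and replacing it by a (necessarily unique) other diagonal. -/
def FlipRel {m : ℕ} (T T' : Finset (Diag m)) : Prop :=
  IsTriangulation T ∧ IsTriangulation T' ∧
  ∃ d d' : Diag m, d ∈ T ∧ d' ∉ T ∧ T' = insert d' (T.erase d)

/-!
Every triangulation `T` is connected by flips to the fan of all diagonals at vertex `0`.
If `T` is not the fan, some two consecutive neighbours `a < b` of `0` in `T` are not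
adjacent vertices; then `(a, b)` is a diagonal of `T`, and flipping it inside the quadrilateral
`0 a c b`, where `a c b` is the other triangle of `T` on `(a, b)`, creates the diagonal `(0, c)`.
So every flip of this kind adds a diagonal at `0`, and since flips are reversible any two
triangulations meet at the fan.

That `(a, b)` belongs to `T` uses maximality: at most `m - 3` diagonals of an `m`-gon are
pairwise non-crossing. This follows by induction on `m`, deleting the vertex cut off by a
shortest diagonal.
-/

open Finset

def Interleave (p q : ℕ × ℕ) : Prop :=
  p.1 < q.1 ∧ q.1 < p.2 ∧ p.2 < q.2 ∨ q.1 < p.1 ∧ p.1 < q.2 ∧ q.2 < p.2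

lemma Interleave.symm {p q : ℕ × ℕ} (h : Interleave p q) : Interleave q p :=
  Or.symm h

lemma not_interleave_self (p : ℕ × ℕ) : ¬Interleave p p := by
  unfold Interleave; omega

def IsNatDiag (m : ℕ) (p : ℕ × ℕ) : Prop :=
  p.1 + 2 ≤ p.2 ∧ p.2 < m ∧ ¬(p.1 = 0 ∧ p.2 = m - 1)

def deleteVertex (v z : ℕ) : ℕ := if z < v then z else z - 1

lemma lt_of_deleteVertex_lt {v a b : ℕ} (h : deleteVertex v a < deleteVertex v b) : a < b := by
  unfold deleteVertex at h; split_ifs at h <;> omega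

lemma deleteVertex_inj {v a b : ℕ} (ha : a ≠ v) (hb : b ≠ v)
    (h : deleteVertex v a = deleteVertex v b) : a = b := by
  unfold deleteVertex at h; split_ifs at h <;> omega

lemma Interleave.of_map_deleteVertex {v : ℕ} {p q : ℕ × ℕ}
    (h : Interleave (Prod.map (deleteVertex v) (deleteVertex v) p)
      (Prod.map (deleteVertex v) (deleteVertex v) q)) : Interleave p q := by
  rcases h with ⟨h1, h2, h3⟩ | ⟨h1, h2, h3⟩
  · exact Or.inl ⟨lt_of_deleteVertex_lt h1, lt_of_deleteVertex_lt h2, lt_of_deleteVertex_lt h3⟩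
  · exact Or.inr ⟨lt_of_deleteVertex_lt h1, lt_of_deleteVertex_lt h2, lt_of_deleteVertex_lt h3⟩

lemma IsNatDiag.map_deleteVertex {m : ℕ} {d e : ℕ × ℕ} (hd : IsNatDiag (m + 1) d)
    (he : IsNatDiag (m + 1) e) (hne : e ≠ d) (h1 : ¬(d.1 < e.1 ∧ e.1 < d.2))
    (h2 : ¬(d.1 < e.2 ∧ e.2 < d.2)) :
    IsNatDiag m (Prod.map (deleteVertex (d.1 + 1)) (deleteVertex (d.1 + 1)) e) := by
  obtain ⟨d1, d2⟩ := d
  obtain ⟨e1, e2⟩ := e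
  simp only [ne_eq, Prod.mk.injEq] at hne
  simp only [IsNatDiag, Prod.map_fst, Prod.map_snd, deleteVertex] at *
  split_ifs <;> omega

theorem card_le_of_pairwise_not_interleave (m : ℕ) (P : Finset (ℕ × ℕ))
    (hdiag : ∀ p ∈ P, IsNatDiag m p) (hP : ∀ p ∈ P, ∀ q ∈ P, ¬Interleave p q) :
    P.card ≤ m - 3 := by
  induction m generalizing P with
  | zero =>
    rw [eq_empty_of_forall_notMem fun p hp => absurd (hdiag p hp).2.1 (Nat.not_lt_zero _)]
    simp
  | succ m ih =>
    rcases P.eq_empty_or_nonempty with rfl | hne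
    · simp
    obtain ⟨d, hdP, hmin⟩ := P.exists_min_image (fun p => p.2 - p.1) hne
    have hd := hdiag d hdP
    -- no endpoint lies strictly inside a shortest diagonal `d`, so the vertex `d.1 + 1` is
    -- on no other diagonal and can be deleted
    have hinside : ∀ e ∈ P, ¬(d.1 < e.1 ∧ e.1 < d.2) ∧ ¬(d.1 < e.2 ∧ e.2 < d.2) := by
      intro e he
      have hde := hP d hdP e he
      have := hmin e he
      have := (hdiag e he).1
      unfold Interleave at hde
      omega
    set f := Prod.map (deleteVertex (d.1 + 1)) (deleteVertex (d.1 + 1))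
    have hQdiag : ∀ q ∈ (P.erase d).image f, IsNatDiag m q := by
      simp only [mem_image, mem_erase]
      rintro _ ⟨e, ⟨hed, he⟩, rfl⟩
      exact hd.map_deleteVertex (hdiag e he) hed (hinside e he).1 (hinside e he).2
    have hQ : ∀ p ∈ (P.erase d).image f, ∀ q ∈ (P.erase d).image f, ¬Interleave p q := by
      simp only [mem_image]
      rintro _ ⟨e, he, rfl⟩ _ ⟨e', he', rfl⟩ h
      exact hP e (mem_of_mem_erase he) e' (mem_of_mem_erase he') h.of_map_deleteVertex
    have hinj : Set.InjOn f (P.erase d) := by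
      intro e he e' he' h
      have := hinside e (mem_of_mem_erase he)
      have := hinside e' (mem_of_mem_erase he')
      have := hd.1
      simp only [f, Prod.map, Prod.mk.injEq] at h
      exact Prod.ext (deleteVertex_inj (by omega) (by omega) h.1)
        (deleteVertex_inj (by omega) (by omega) h.2)
    have := ih _ hQdiag hQ
    rw [card_image_of_injOn hinj, card_erase_of_mem hdP] at this
    have := card_pos.mpr hne
    have := hd.1
    have := hd.2
    omega

instance (m : ℕ) : DecidablePred (IsDiag m) := fun _ => by unfold IsDiag; infer_instance

namespace Diag

variable {m : ℕ}

def toNat (d : Diag m) : ℕ × ℕ := ((d.1.1 : ℕ), (d.1.2 : ℕ))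

lemma toNat_injective : Function.Injective (toNat : Diag m → ℕ × ℕ) := by
  intro d e h
  simp only [toNat, Prod.mk.injEq] at h
  exact Subtype.ext (Prod.ext (Fin.ext h.1) (Fin.ext h.2))

lemma isNatDiag_toNat (d : Diag m) : IsNatDiag m d.toNat := by
  obtain ⟨h1, h2⟩ := d.2
  rw [Fin.lt_def] at h1
  unfold IsNatDiag toNat
  exact ⟨by omega, d.1.2.isLt, fun h => h2 (Or.inr h)⟩

lemma exists_toNat_eq {p : ℕ × ℕ} (hp : IsNatDiag m p) : ∃ d : Diag m, d.toNat = p := by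
  obtain ⟨h1, h2, h3⟩ := hp
  exact ⟨⟨(⟨p.1, by omega⟩, ⟨p.2, h2⟩), Fin.mk_lt_mk.mpr (by omega), by
    show ¬(p.2 = p.1 + 1 ∨ (p.1 = 0 ∧ p.2 = m - 1)); omega⟩, rfl⟩

lemma cross_iff {d e : Diag m} : Cross d e ↔ Interleave d.toNat e.toNat := by
  simp only [Cross, Interleave, toNat, Fin.lt_def]

end Diag

theorem card_le_of_pairwise_not_cross {m : ℕ} (U : Finset (Diag m))
    (hU : ∀ d ∈ U, ∀ e ∈ U, ¬Cross d e) : U.card ≤ m - 3 := by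
  rw [← card_image_of_injective U Diag.toNat_injective]
  apply card_le_of_pairwise_not_interleave
  · simp only [mem_image]
    rintro _ ⟨d, -, rfl⟩
    exact d.isNatDiag_toNat
  · simp only [mem_image]
    rintro _ ⟨d, hd, rfl⟩ _ ⟨e, he, rfl⟩
    exact Diag.cross_iff.not.mp (hU d hd e he)

lemma FlipRel.symm {m : ℕ} {T T' : Finset (Diag m)} (h : FlipRel T T') : FlipRel T' T := by
  obtain ⟨hT, hT', d, d', hd, hd', rfl⟩ := h
  refine ⟨hT', hT, d', d, mem_insert_self _ _, ?_, ?_⟩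
  · simp only [mem_insert, mem_erase, ne_eq, not_true_eq_false, false_and, or_false]
    exact fun h => hd' (h ▸ hd)
  · rw [erase_insert fun h => hd' (mem_of_mem_erase h), insert_erase hd]

instance {m : ℕ} : Std.Symm (@FlipRel m) := ⟨fun _ _ => FlipRel.symm⟩

lemma exists_gap_of_card_lt (S : Finset ℕ) {lo hi : ℕ} (hlo : lo ∈ S) (hhi : hi ∈ S)
    (hcard : S.card < hi + 1 - lo) :
    ∃ a ∈ S, ∃ b ∈ S, a + 2 ≤ b ∧ ∀ s ∈ S, s ≤ a ∨ b ≤ s := by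
  obtain ⟨c, hcI, hcS⟩ := exists_mem_notMem_of_card_lt_card (s := S) (t := Icc lo hi)
    (by rwa [Nat.card_Icc])
  rw [mem_Icc] at hcI
  have hlo_lt : lo < c := lt_of_le_of_ne hcI.1 fun h => hcS (h ▸ hlo)
  have hlt_hi : c < hi := lt_of_le_of_ne hcI.2 fun h => hcS (h.symm ▸ hhi)
  have hL : (S.filter (· < c)).Nonempty := ⟨lo, mem_filter.mpr ⟨hlo, hlo_lt⟩⟩
  have hR : (S.filter (c < ·)).Nonempty := ⟨hi, mem_filter.mpr ⟨hhi, hlt_hi⟩⟩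
  obtain ⟨haS, hac⟩ := mem_filter.mp ((S.filter (· < c)).max'_mem hL)
  obtain ⟨hbS, hcb⟩ := mem_filter.mp ((S.filter (c < ·)).min'_mem hR)
  refine ⟨_, haS, _, hbS, by omega, fun s hs => ?_⟩
  rcases lt_trichotomy s c with h | rfl | h
  · exact Or.inl ((S.filter (· < c)).le_max' s (mem_filter.mpr ⟨hs, h⟩))
  · exact absurd hs hcS
  · exact Or.inr ((S.filter (c < ·)).min'_le s (mem_filter.mpr ⟨hs, h⟩))

def fanDegree {m : ℕ} (T : Finset (Diag m)) : ℕ := #(T.filter fun d => d.toNat.1 = 0)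

def fan (m : ℕ) : Finset (Diag m) := univ.filter fun d => d.toNat.1 = 0

namespace IsTriangulation

variable {m : ℕ} {T : Finset (Diag m)}

lemma not_interleave (hT : IsTriangulation T) {d e : Diag m} (hd : d ∈ T) (he : e ∈ T) :
    ¬Interleave d.toNat e.toNat :=
  Diag.cross_iff.not.mp (hT.1 d hd e he)

lemma mem_of_forall_not_interleave (hT : IsTriangulation T) {d : Diag m}
    (hd : ∀ e ∈ T, ¬Interleave d.toNat e.toNat) : d ∈ T := by
  by_contra hdT
  have hnc : ∀ p ∈ insert d T, ∀ q ∈ insert d T, ¬Cross p q := by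
    simp only [mem_insert, Diag.cross_iff]
    rintro p (rfl | hp) q (rfl | hq)
    · exact not_interleave_self _
    · exact hd q hq
    · exact fun h => hd p hp h.symm
    · exact hT.not_interleave hp hq
  have := card_le_of_pairwise_not_cross _ hnc
  rw [card_insert_of_notMem hdT] at this
  have := hT.2
  omega

lemma flipRel_insert_erase (hT : IsTriangulation T) {g d : Diag m} (hg : g ∈ T) (hd : d ∉ T)
    (hcross : ∀ e ∈ T, e ≠ g → ¬Interleave d.toNat e.toNat) :
    FlipRel T (insert d (T.erase g)) := by
  refine ⟨hT, ⟨?_, ?_⟩, g, d, hg, hd, rfl⟩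
  · simp only [mem_insert, mem_erase, Diag.cross_iff]
    rintro p (rfl | ⟨hpg, hp⟩) q (rfl | ⟨hqg, hq⟩)
    · exact not_interleave_self _
    · exact hcross q hq hqg
    · exact fun h => hcross p hp hpg h.symm
    · exact hT.not_interleave hp hq
  · rw [card_insert_of_notMem fun h => hd (mem_of_mem_erase h), card_erase_of_mem hg]
    have := hT.2
    have := card_pos.mpr ⟨g, hg⟩
    omega

lemma fanDegree_le (hT : IsTriangulation T) : fanDegree T ≤ m - 3 := by
  have := card_filter_le T fun d => d.toNat.1 = 0
  have := hT.2
  unfold fanDegree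
  omega

lemma eq_fan_of_fanDegree_eq (hT : IsTriangulation T)
    (h : fanDegree T = m - 3) : T = fan m := by
  have hfilter : T.filter (fun d => d.toNat.1 = 0) = T :=
    eq_of_subset_of_card_le (filter_subset _ _) (by unfold fanDegree at h; have := hT.2; omega)
  have hsub : T ⊆ fan m := fun d hd => by
    rw [← hfilter, mem_filter] at hd
    exact mem_filter.mpr ⟨mem_univ _, hd.2⟩
  refine eq_of_subset_of_card_le hsub ?_
  have hfan : ∀ d ∈ fan m, ∀ e ∈ fan m, ¬Cross d e := by
    simp only [fan, mem_filter, mem_univ, true_and, Diag.cross_iff, Interleave]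
    omega
  have := card_le_of_pairwise_not_cross _ hfan
  have := hT.2
  omega

lemma exists_flip_of_fan_gap (hT : IsTriangulation T) {a b : ℕ}
    (ha : 1 ≤ a) (hab : a + 2 ≤ b) (hb : b < m)
    (hfa : ∀ e ∈ T, ¬Interleave (0, a) e.toNat) (hfb : ∀ e ∈ T, ¬Interleave (0, b) e.toNat)
    (hgap : ∀ e ∈ T, e.toNat.1 = 0 → e.toNat.2 ≤ a ∨ b ≤ e.toNat.2) :
    ∃ T', FlipRel T T' ∧ fanDegree T' = fanDegree T + 1 := by
  obtain ⟨g, hg⟩ := Diag.exists_toNat_eq (m := m) (p := (a, b)) ⟨hab, hb, by omega⟩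
  have hgT : g ∈ T := hT.mem_of_forall_not_interleave fun e he h => by
    have := hfa e he
    have := hfb e he
    have := hgap e he
    simp only [hg, Interleave] at *
    omega
  -- `a c b` is the triangle of `T` on `(a, b)` away from `0`
  obtain ⟨c, hac, hcb, hc, hcmax⟩ : ∃ c, a < c ∧ c < b ∧
      (c = a + 1 ∨ ∃ e ∈ T, e.toNat = (a, c)) ∧
      ∀ e ∈ T, e.toNat.1 = a → e.toNat.2 < b → e.toNat.2 ≤ c := by
    set P := fun j => j = a + 1 ∨ ∃ e ∈ T, e.toNat = (a, j)
    have hP : P (a + 1) := Or.inl rfl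
    refine ⟨Nat.findGreatest P (b - 1), Nat.le_findGreatest (by omega) hP,
      by have := Nat.findGreatest_le (P := P) (b - 1); omega,
      Nat.findGreatest_spec (by omega) hP, fun e he he1 he2 => ?_⟩
    exact Nat.le_findGreatest (by omega) (Or.inr ⟨e, he, Prod.ext he1 rfl⟩)
  obtain ⟨d, hd⟩ := Diag.exists_toNat_eq (m := m) (p := (0, c))
    (by simp only [IsNatDiag]; omega)
  have hdT : d ∉ T := fun h => by have := hgap d h; simp only [hd, true_implies] at this; omega
  have hcross : ∀ e ∈ T, e ≠ g → ¬Interleave d.toNat e.toNat := by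
    intro e he heg h
    have := hfa e he
    have := hfb e he
    have := hT.not_interleave hgT he
    have := hcmax e he
    have hne : e.toNat ≠ (a, b) := hg ▸ fun h => heg (Diag.toNat_injective h)
    rw [ne_eq, Prod.ext_iff] at hne
    rcases hc with rfl | ⟨e', he', he'c⟩
    · simp only [hd, hg, Interleave] at *
      omega
    · have := hT.not_interleave he' he
      simp only [hd, hg, he'c, Interleave] at *
      omega
  refine ⟨_, hT.flipRel_insert_erase hgT hdT hcross, ?_⟩
  unfold fanDegree
  rw [filter_insert, if_pos (by rw [hd]), filter_erase,
    erase_eq_of_notMem fun h => by have := (mem_filter.mp h).2; rw [hg] at this; omega,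
    card_insert_of_notMem fun h => hdT (mem_of_mem_filter _ h)]

lemma exists_flip_of_fanDegree_lt (hT : IsTriangulation T) (h : fanDegree T < m - 3) :
    ∃ T', FlipRel T T' ∧ fanDegree T' = fanDegree T + 1 := by
  -- the neighbours of `0` in the triangulated polygon
  set S : Finset ℕ := insert 1 (insert (m - 1)
    ((T.filter fun d => d.toNat.1 = 0).image fun d => d.toNat.2))
  have hS : ∀ s ∈ S, (1 ≤ s ∧ s < m) ∧ ∀ e ∈ T, ¬Interleave (0, s) e.toNat := by
    simp only [S, mem_insert, mem_image, mem_filter]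
    rintro s (rfl | rfl | ⟨d, ⟨hd, hd0⟩, rfl⟩) <;>
      refine ⟨?_, fun e he => ?_⟩
    · omega
    · unfold Interleave; omega
    · omega
    · have := e.isNatDiag_toNat.2.1
      unfold Interleave; omega
    · have := d.isNatDiag_toNat
      unfold IsNatDiag at this
      omega
    · rw [← hd0]
      exact hT.not_interleave hd he
  have hcard : S.card < (m - 1) + 1 - 1 := by
    have : S.card ≤ _ := card_insert_le _ _
    have := card_insert_le (m - 1) ((T.filter fun d => d.toNat.1 = 0).image fun d => d.toNat.2)
    have := card_image_le (s := T.filter fun d => d.toNat.1 = 0) (f := fun d => d.toNat.2)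
    unfold fanDegree at h
    omega
  obtain ⟨a, haS, b, hbS, hab, hgap⟩ :=
    exists_gap_of_card_lt S (mem_insert_self _ _) (mem_insert_of_mem (mem_insert_self _ _)) hcard
  refine hT.exists_flip_of_fan_gap (hS a haS).1.1 hab (hS b hbS).1.2 (hS a haS).2 (hS b hbS).2
    fun e he he0 => hgap _ ?_
  exact mem_insert_of_mem (mem_insert_of_mem (mem_image_of_mem _ (mem_filter.mpr ⟨he, he0⟩)))

lemma reflTransGen_fan (hT : IsTriangulation T) : Relation.ReflTransGen FlipRel T (fan m) := by
  induction hk : m - 3 - fanDegree T generalizing T with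
  | zero => rw [hT.eq_fan_of_fanDegree_eq (by have := hT.fanDegree_le; omega)]
  | succ k ih =>
    obtain ⟨T', hflip, hdeg⟩ := hT.exists_flip_of_fanDegree_lt (by omega)
    exact .head hflip (ih hflip.2.1 (by omega))

end IsTriangulation

theorem stmt18_general (m : ℕ) (T T' : Finset (Diag m))
    (hT : IsTriangulation T) (hT' : IsTriangulation T') :
    Relation.ReflTransGen FlipRel T T' :=
  hT.reflTransGen_fan.trans (Std.Symm.symm _ _ hT'.reflTransGen_fan)

/-- Connectivity of the exchange graph of triangulations of a convex polygon under
flips: any two triangulations of the convex `(n+3)`-gon are related by a finite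
sequence of flips. -/
theorem stmt18 (m : ℕ) (hm : 3 ≤ m) (T T' : Finset (Diag m))
    (hT : IsTriangulation T) (hT' : IsTriangulation T') :
    Relation.ReflTransGen FlipRel T T' :=
  stmt18_general m T T' hT hT'
end
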